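/- arXiv:math/0104133 — 6 statements merged into one kernel-verified Lean document; each statement's English description precedes it below -/
import Mathlib

section
/- Let u ∈ C_{+,log} be (log,exp)-convex, meaning x ↦ log u(e^x) is convex on ℝ. Then u(r) = sup_{t≥0} ℓ_u(t) r^t for all r ≥ 0, where ℓ_u(t) = inf_{s>0} u(s)/s^t. -/
/-!
With `f x = log u (eˣ)`, continuity of `u` at `0` makes the convex function `f` bounded above
at `-∞`, hence nondecreasing. For `r > 0` the supporting line of `f` at `log r` has slope
`t = f'₊(log r) ≥ 0`, and it says precisely that `u s / s ^ t ≥ u r / r ^ t` for all `s > 0`, i.e.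
`ℓ_u(t) r ^ t = u r`. For `r = 0` the slope `t = 0` works, since then `u 0 ≤ u s` for all `s`.
The reverse inequality `ℓ_u(t) r ^ t ≤ u r` is the definition of `ℓ_u` (and continuity at `r = 0`).
-/

noncomputable def ell (u : ℝ → ℝ) (t : ℝ) : ℝ :=
  ⨅ r : {r : ℝ // 0 < r}, u r / (r : ℝ) ^ t

open Real Filter Topology Set

namespace ConvexOn

variable {f : ℝ → ℝ}

theorem monotone_of_isBoundedUnder_le_atBot (hf : ConvexOn ℝ univ f)
    (hb : IsBoundedUnder (· ≤ ·) atBot f) : Monotone f := by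
  intro a b hab
  rcases hab.eq_or_lt with rfl | hab
  · exact le_rfl
  by_contra! hba
  set s := (f b - f a) / (b - a)
  have hs : s < 0 := div_neg_of_neg_of_pos (by linarith) (by linarith)
  have hline : ∀ x < a, f a + s * (x - a) ≤ f x := by
    intro x hx
    have hslope := hf.slope_mono_adjacent (mem_univ x) (mem_univ b) hx hab
    rw [div_le_iff₀ (by linarith)] at hslope
    linarith
  have hline_top : Tendsto (fun x => f a + s * (x - a)) atBot atTop :=
    tendsto_atTop_add_const_left _ _
      ((tendsto_atBot_add_const_right _ _ tendsto_id).const_mul_atBot_of_neg hs)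
  have htop : Tendsto f atBot atTop :=
    tendsto_atTop_mono' _ ((eventually_lt_atBot a).mono hline) hline_top
  exact not_isBoundedUnder_of_tendsto_atTop htop hb

theorem add_rightDeriv_mul_sub_le (hf : ConvexOn ℝ univ f) (x₀ x : ℝ) :
    f x₀ + derivWithin f (Ioi x₀) x₀ * (x - x₀) ≤ f x := by
  have hx₀ : x₀ ∈ interior univ := by simp
  rcases lt_trichotomy x x₀ with hx | rfl | hx
  · have hslope : slope f x x₀ ≤ derivWithin f (Ioi x₀) x₀ :=
      (hf.slope_le_leftDeriv_of_mem_interior (mem_univ x) hx₀ hx).trans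
        (hf.leftDeriv_le_rightDeriv_of_mem_interior hx₀)
    rw [slope_def_field, div_le_iff₀ (by linarith)] at hslope
    linarith
  · simp
  · have hslope := hf.rightDeriv_le_slope_of_mem_interior hx₀ (mem_univ x) hx
    rw [slope_def_field, le_div_iff₀ (by linarith)] at hslope
    linarith

end ConvexOn

section Legendre

variable {u : ℝ → ℝ}

theorem ell_le_div_rpow (hu : ∀ s > 0, 0 ≤ u s) (t : ℝ) {s : ℝ} (hs : 0 < s) :
    ell u t ≤ u s / s ^ t :=
  ciInf_le ⟨0, forall_mem_range.2 fun r : {r : ℝ // 0 < r} =>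
    div_nonneg (hu r r.2) (rpow_nonneg r.2.le t)⟩ ⟨s, hs⟩

theorem le_ell {c t : ℝ} (h : ∀ s > 0, c ≤ u s / s ^ t) : c ≤ ell u t :=
  have : Nonempty {r : ℝ // 0 < r} := ⟨⟨1, one_pos⟩⟩
  le_ciInf fun s => h s s.2

theorem ell_mul_rpow_le (hu : ∀ s ≥ 0, 0 ≤ u s) (hu₀ : ContinuousWithinAt u (Ioi 0) 0)
    {t : ℝ} (ht : 0 ≤ t) {r : ℝ} (hr : 0 ≤ r) : ell u t * r ^ t ≤ u r := by
  have hu' : ∀ s > 0, 0 ≤ u s := fun s hs => hu s hs.le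
  rcases hr.eq_or_lt with rfl | hr
  · rcases ht.eq_or_lt with rfl | ht
    · rw [rpow_zero, mul_one]
      refine ge_of_tendsto hu₀ (eventually_nhdsWithin_of_forall fun s (hs : 0 < s) => ?_)
      simpa using ell_le_div_rpow hu' 0 hs
    · simpa [zero_rpow ht.ne'] using hu 0 le_rfl
  · exact (le_div_iff₀ (rpow_pos_of_pos hr t)).1 (ell_le_div_rpow hu' t hr)

theorem le_ell_mul_rpow (hu : ∀ s > 0, 0 < u s) {t r : ℝ} (hr : 0 < r)
    (hline : ∀ s > 0, log (u r) + t * (log s - log r) ≤ log (u s)) :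
    u r ≤ ell u t * r ^ t := by
  have hexp : ∀ s > 0, u s / s ^ t = exp (log (u s) - t * log s) := fun s hs => by
    rw [exp_sub, exp_log (hu s hs), mul_comm, ← rpow_def_of_pos hs]
  rw [← div_le_iff₀ (rpow_pos_of_pos hr t)]
  refine le_ell fun s hs => ?_
  rw [hexp r hr, hexp s hs, exp_le_exp]
  linarith [hline s hs]

end Legendre

theorem legendre_inversion_general (u : ℝ → ℝ)
    (hpos : ∀ r ≥ 0, 0 < u r)
    (hcont : ContinuousOn u (Set.Ici 0))
    (hconv : ConvexOn ℝ Set.univ (fun x : ℝ => Real.log (u (Real.exp x)))) :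
    ∀ r ≥ (0 : ℝ), u r = ⨆ t : {t : ℝ // 0 ≤ t}, ell u t * r ^ (t : ℝ) := by
  intro r hr
  set f := fun x : ℝ => log (u (exp x))
  have hf_exp_log : ∀ s > 0, f (log s) = log (u s) := fun s hs => by simp only [f, exp_log hs]
  have hu₀ : ContinuousWithinAt u (Ici 0) 0 := hcont 0 self_mem_Ici
  have hf_atBot : Tendsto f atBot (𝓝 (log (u 0))) :=
    ((continuousAt_log (hpos 0 le_rfl).ne').tendsto.comp hu₀).comp
      (tendsto_nhdsWithin_of_tendsto_nhds_of_eventually_within _ tendsto_exp_atBot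
        (.of_forall fun x => (exp_pos x).le))
  have hmono : Monotone f := hconv.monotone_of_isBoundedUnder_le_atBot hf_atBot.isBoundedUnder_le
  have hle : ∀ t : {t : ℝ // 0 ≤ t}, ell u t * r ^ (t : ℝ) ≤ u r := fun t =>
    ell_mul_rpow_le (fun s hs => (hpos s hs).le) (hu₀.mono Ioi_subset_Ici_self) t.2 hr
  obtain ⟨t, ht, hut⟩ : ∃ t ≥ (0 : ℝ), u r ≤ ell u t * r ^ t := by
    rcases hr.eq_or_lt with rfl | hr
    · refine ⟨0, le_rfl, ?_⟩
      rw [rpow_zero, mul_one]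
      refine le_ell fun s hs => ?_
      rw [rpow_zero, div_one, ← log_le_log_iff (hpos 0 le_rfl) (hpos s hs.le),
        ← hf_exp_log s hs]
      exact hmono.le_of_tendsto hf_atBot _
    · refine ⟨derivWithin f (Ioi (log r)) (log r), (hmono.monotoneOn _).derivWithin_nonneg,
        le_ell_mul_rpow (fun s hs => hpos s hs.le) hr fun s hs => ?_⟩
      simpa only [hf_exp_log s hs, hf_exp_log r hr] using
        hconv.add_rightDeriv_mul_sub_le (log r) (log s)
  exact le_antisymm (hut.trans (le_ciSup ⟨u r, forall_mem_range.2 hle⟩ ⟨t, ht⟩)) (ciSup_le hle)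

theorem legendre_inversion (u : ℝ → ℝ)
    (hpos : ∀ r ≥ 0, 0 < u r)
    (hcont : ContinuousOn u (Set.Ici 0))
    (hlim : Filter.Tendsto (fun r => Real.log (u r) / Real.log r)
      Filter.atTop Filter.atTop)
    (hconv : ConvexOn ℝ Set.univ (fun x : ℝ => Real.log (u (Real.exp x)))) :
    ∀ r ≥ (0 : ℝ), u r = ⨆ t : {t : ℝ // 0 ≤ t}, ell u t * r ^ (t : ℝ) :=
  legendre_inversion_general u hpos hcont hconv
end

section
/- Let u ∈ C_{+,log} and k > 0. If u is (log, x^k)-convex, i.e., x ↦ log u(x^k) is convex on [0,∞), then for all integers n, m ≥ 0, ℓ_u(n) ℓ_u(m) ≤ ℓ_u(0) 2^{k(n+m)} ℓ_u(n+m), where ℓ_u(t) = inf_{r>0} u(r)/r^t. -/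
lemma ell_bddBelow (u : ℝ → ℝ) (t : ℝ) (hpos : ∀ r ≥ 0, 0 < u r) :
    BddBelow (Set.range fun r : {r : ℝ // 0 < r} => u r / (r : ℝ) ^ t) := by
  refine ⟨0, Set.forall_mem_range.2 fun r => ?_⟩
  exact div_nonneg (hpos r r.2.le).le (Real.rpow_nonneg r.2.le t)

lemma ell_le (u : ℝ → ℝ) (t : ℝ) (hpos : ∀ r ≥ 0, 0 < u r) {r : ℝ} (hr : 0 < r) :
    ell u t ≤ u r / r ^ t :=
  ciInf_le (ell_bddBelow u t hpos) ⟨r, hr⟩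

lemma ell_nonneg (u : ℝ → ℝ) (t : ℝ) (hpos : ∀ r ≥ 0, 0 < u r) : 0 ≤ ell u t :=
  Real.iInf_nonneg fun r => div_nonneg (hpos r r.2.le).le (Real.rpow_nonneg r.2.le t)

theorem legendre_submultiplicative (u : ℝ → ℝ) (k : ℝ) (hk : 0 < k)
    (hpos : ∀ r ≥ 0, 0 < u r)
    (hcont : ContinuousOn u (Set.Ici 0))
    (hlim : Filter.Tendsto (fun r => Real.log (u r) / Real.log r)
      Filter.atTop Filter.atTop)
    (hconv : ConvexOn ℝ (Set.Ici 0) (fun x : ℝ => Real.log (u (x ^ k)))) :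
    ∀ n m : ℕ,
      ell u n * ell u m ≤ ell u 0 * (2 : ℝ) ^ (k * (n + m : ℝ)) * ell u (n + m) := by
  intro n m
  haveI : Nonempty {r : ℝ // 0 < r} := ⟨⟨1, one_pos⟩⟩
  set N : ℝ := (n : ℝ) + m with hN
  have hN0 : 0 ≤ N := by positivity
  set C : ℝ := (2 : ℝ) ^ (k * N) with hC
  have hCpos : 0 < C := Real.rpow_pos_of_pos two_pos _
  -- key pointwise inequality
  have key : ∀ s t : ℝ, 0 < s → 0 < t →
      ell u n * ell u m ≤ C * u s * (u t / t ^ N) := by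
    intro s t hs ht
    set a : ℝ := s ^ k⁻¹ with ha
    set b : ℝ := t ^ k⁻¹ with hb
    have ha0 : 0 < a := Real.rpow_pos_of_pos hs _
    have hb0 : 0 < b := Real.rpow_pos_of_pos ht _
    set c : ℝ := (a + b) / 2 with hc
    have hc0 : 0 < c := by positivity
    set r : ℝ := c ^ k with hr
    have hr0 : 0 < r := Real.rpow_pos_of_pos hc0 _
    have hak : a ^ k = s := Real.rpow_inv_rpow hs.le hk.ne'
    have hbk : b ^ k = t := Real.rpow_inv_rpow ht.le hk.ne'
    -- convexity at midpoint
    have hmid : Real.log (u r) ≤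
        (1/2) * Real.log (u s) + (1/2) * Real.log (u t) := by
      have := hconv.2 (Set.mem_Ici.2 ha0.le) (Set.mem_Ici.2 hb0.le)
        (by norm_num : (0:ℝ) ≤ 1/2) (by norm_num : (0:ℝ) ≤ 1/2) (by norm_num)
      have hcm : (1/2 : ℝ) • a + (1/2 : ℝ) • b = c := by
        simp [hc, smul_eq_mul]; ring
      rw [hcm] at this
      simpa [hr, hak, hbk] using this
    have hur2 : u r ^ 2 ≤ u s * u t := by
      have h1 : Real.log (u r ^ 2) ≤ Real.log (u s * u t) := by
        rw [Real.log_pow, Real.log_mul (hpos s hs.le).ne' (hpos t ht.le).ne']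
        push_cast
        linarith
      exact (Real.log_le_log_iff (pow_pos (hpos r hr0.le) 2)
        (mul_pos (hpos s hs.le) (hpos t ht.le))).1 h1
    have hrt : t / 2 ^ k ≤ r := by
      have h1 : b / 2 ≤ c := by
        rw [hc]; linarith
      have h2 : (b / 2) ^ k ≤ c ^ k :=
        Real.rpow_le_rpow (by positivity) h1 hk.le
      have h3 : (b / 2 : ℝ) ^ k = t / 2 ^ k := by
        rw [Real.div_rpow hb0.le (by norm_num : (0:ℝ) ≤ 2), hbk]
      rw [← h3]; exact h2
    have h2k : (0:ℝ) < (2:ℝ) ^ k := Real.rpow_pos_of_pos two_pos _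
    -- bound ell u n * ell u m by (u r)^2 / r^N
    have hn : ell u n ≤ u r / r ^ (n : ℝ) := ell_le u n hpos hr0
    have hm : ell u m ≤ u r / r ^ (m : ℝ) := ell_le u m hpos hr0
    have hprod : ell u n * ell u m ≤ u r ^ 2 / r ^ N := by
      have := mul_le_mul hn hm (ell_nonneg u m hpos)
        (div_nonneg (hpos r hr0.le).le (Real.rpow_nonneg hr0.le _))
      calc ell u n * ell u m ≤ (u r / r ^ (n:ℝ)) * (u r / r ^ (m:ℝ)) := this
        _ = u r ^ 2 / r ^ N := by
            rw [div_mul_div_comm, ← Real.rpow_add hr0, sq, hN]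
    have hstep1 : u r ^ 2 / r ^ N ≤ u s * u t / r ^ N := by
      have hrN : (0:ℝ) ≤ r ^ N := (Real.rpow_pos_of_pos hr0 _).le
      gcongr
    have hstep2 : u s * u t / r ^ N ≤ u s * u t / (t / 2 ^ k) ^ N := by
      have h1 : (0:ℝ) ≤ u s * u t := (mul_pos (hpos s hs.le) (hpos t ht.le)).le
      have h2 : (0:ℝ) < (t / 2 ^ k) ^ N := Real.rpow_pos_of_pos (div_pos ht h2k) _
      have h3 : (t / 2 ^ k) ^ N ≤ r ^ N := Real.rpow_le_rpow (div_pos ht h2k).le hrt hN0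
      gcongr
    have htN : (t:ℝ) ^ N ≠ 0 := (Real.rpow_pos_of_pos ht _).ne'
    have h2kN : ((2:ℝ) ^ k) ^ N ≠ 0 := (Real.rpow_pos_of_pos h2k _).ne'
    have hstep3 : u s * u t / (t / 2 ^ k) ^ N = C * u s * (u t / t ^ N) := by
      rw [Real.div_rpow ht.le h2k.le, hC, Real.rpow_mul (by norm_num : (0:ℝ) ≤ 2)]
      field_simp
    calc ell u n * ell u m ≤ u r ^ 2 / r ^ N := hprod
      _ ≤ u s * u t / r ^ N := hstep1
      _ ≤ u s * u t / (t / 2 ^ k) ^ N := hstep2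
      _ = C * u s * (u t / t ^ N) := by rw [hstep3]
  -- take infimum over s
  have key2 : ∀ t : ℝ, 0 < t →
      ell u n * ell u m ≤ C * ell u 0 * (u t / t ^ N) := by
    intro t ht
    have hut : 0 < u t / t ^ N :=
      div_pos (hpos t ht.le) (Real.rpow_pos_of_pos ht _)
    have h0 : ell u n * ell u m / (C * (u t / t ^ N)) ≤ ell u 0 := by
      apply le_ciInf
      intro s
      rw [div_le_iff₀ (by positivity)]
      have := key s t s.2 ht
      calc ell u n * ell u m ≤ C * u s * (u t / t ^ N) := this
        _ = u s / (s : ℝ) ^ (0:ℝ) * (C * (u t / t ^ N)) := by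
            rw [Real.rpow_zero, div_one]; ring
    rw [div_le_iff₀ (by positivity)] at h0
    calc ell u n * ell u m ≤ ell u 0 * (C * (u t / t ^ N)) := h0
      _ = C * ell u 0 * (u t / t ^ N) := by ring
  have hL0 : 0 ≤ ell u 0 := ell_nonneg u 0 hpos
  rcases eq_or_lt_of_le hL0 with hL0' | hL0'
  · have := key2 1 one_pos
    rw [← hL0'] at this
    simp only [mul_zero, zero_mul] at this
    calc ell u n * ell u m ≤ 0 := this
      _ ≤ ell u 0 * (2:ℝ) ^ (k * ((n:ℝ) + m)) * ell u (n + m) := by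
          rw [← hL0']
          simp
  · -- ell u 0 > 0
    have hNM : ((n + m : ℕ) : ℝ) = N := by push_cast [hN]; ring
    have hfin : ell u n * ell u m / (C * ell u 0) ≤ ell u N := by
      refine le_ciInf fun t => ?_
      rw [div_le_iff₀ (by positivity)]
      calc ell u n * ell u m ≤ C * ell u 0 * (u t / (t:ℝ) ^ N) := key2 t t.2
        _ = u t / (t:ℝ) ^ N * (C * ell u 0) := by ring
    rw [div_le_iff₀ (by positivity)] at hfin
    have goalN : ell u n * ell u m ≤ ell u 0 * C * ell u N := by
      calc ell u n * ell u m ≤ ell u N * (C * ell u 0) := hfin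
        _ = ell u 0 * C * ell u N := by ring
    exact goalN
end

section
/- Let u ∈ C_{+,1/2}. Then the dual Legendre transform u*(r) = sup_{s≥0} e^{2√(rs)}/u(s) also belongs to C_{+,1/2}, and u* is increasing and (log, x²)-convex on [0,∞). -/
/-!
Write `φ = log u` and `r = x²`. Then `log u*(x²) = sup_{s ≥ 0} (2 x √s - φ s)` is a supremum of
affine functions of `x` with nonnegative slopes `2 √s`, hence convex on `ℝ` and nondecreasing on
`[0, ∞)`. It is finite because `φ s / √s → ∞`: for large `s` the terms are negative, and on the
remaining compact interval they are bounded by continuity. Being finite and convex on `ℝ`, it is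
continuous, and keeping a single term `s` shows that it grows at least like `2 √s · x` for every
`s`, so it is superlinear.
-/

noncomputable def dualL (u : ℝ → ℝ) (r : ℝ) : ℝ :=
  ⨆ s : {s : ℝ // 0 ≤ s}, Real.exp (2 * Real.sqrt (r * s)) / u s

open Real Set Filter

theorem ConvexOn.ciSup {ι E : Type*} [Nonempty ι] [AddCommMonoid E] [Module ℝ E] {s : Set E}
    {f : ι → E → ℝ} (hf : ∀ i, ConvexOn ℝ s (f i))
    (hbdd : ∀ x ∈ s, BddAbove (range fun i => f i x)) :
    ConvexOn ℝ s fun x => ⨆ i, f i x := by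
  refine ⟨(hf (Classical.arbitrary ι)).1, fun x hx y hy a b ha hb hab => ciSup_le fun i => ?_⟩
  calc f i (a • x + b • y) ≤ a * f i x + b * f i y := (hf i).2 hx hy ha hb hab
    _ ≤ a * (⨆ j, f j x) + b * ⨆ j, f j y :=
      add_le_add (mul_le_mul_of_nonneg_left (le_ciSup (hbdd x hx) i) ha)
        (mul_le_mul_of_nonneg_left (le_ciSup (hbdd y hy) i) hb)

/-- The logarithm of `dualL u` in the variable `x = √r`, with `φ = log u`. -/
noncomputable def logDualL (φ : ℝ → ℝ) (x : ℝ) : ℝ :=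
  ⨆ s : {s : ℝ // 0 ≤ s}, 2 * x * √s - φ s

section LogDualL

variable {φ : ℝ → ℝ}

theorem bddAbove_logDualL_terms (hφc : ContinuousOn φ (Ici 0))
    (hφ : Tendsto (fun s => φ s / √s) atTop atTop) (x : ℝ) :
    BddAbove (range fun s : {s : ℝ // 0 ≤ s} => 2 * x * √s - φ s) := by
  obtain ⟨S, hS⟩ := (hφ.eventually_ge_atTop (2 * |x|)).exists_forall_of_atTop
  set T := max S 1
  have hterm_cont : ContinuousOn (fun s => 2 * x * √s - φ s) (Icc 0 T) :=
    (continuousOn_const.mul continuous_sqrt.continuousOn).sub (hφc.mono Icc_subset_Ici_self)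
  obtain ⟨C, hC⟩ := (isCompact_Icc.image_of_continuousOn hterm_cont).bddAbove
  refine ⟨max C 0, forall_mem_range.2 fun s => ?_⟩
  rcases le_or_gt s.1 T with hsT | hTs
  · exact le_max_of_le_left (hC ⟨s.1, ⟨s.2, hsT⟩, rfl⟩)
  · have hsqrt_pos : 0 < √s.1 := sqrt_pos.2 (by linarith [le_max_right S 1])
    have hgrowth : 2 * |x| * √s.1 ≤ φ s.1 :=
      (le_div_iff₀ hsqrt_pos).1 (hS s.1 (by linarith [le_max_left S 1]))
    have hx : 2 * x * √s.1 ≤ 2 * |x| * √s.1 := by gcongr; exact le_abs_self x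
    exact le_max_of_le_right (by linarith)

variable (hφc : ContinuousOn φ (Ici 0)) (hφ : Tendsto (fun s => φ s / √s) atTop atTop)
include hφc hφ

theorem convexOn_logDualL : ConvexOn ℝ univ (logDualL φ) := by
  refine ConvexOn.ciSup (fun s => ⟨convex_univ, fun x _ y _ a b _ _ hab => le_of_eq ?_⟩)
    fun x _ => bddAbove_logDualL_terms hφc hφ x
  simp only [smul_eq_mul]
  linear_combination (φ s) * hab

theorem monotoneOn_logDualL : MonotoneOn (logDualL φ) (Ici 0) := fun x _ y _ hxy =>
  ciSup_mono (bddAbove_logDualL_terms hφc hφ y) fun s => by gcongr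

theorem tendsto_logDualL_div_atTop : Tendsto (fun x => logDualL φ x / x) atTop atTop := by
  refine tendsto_atTop.2 fun M => ?_
  -- the single term `s₀` with `√s₀ = |M| + 1` already forces `logDualL φ x ≥ M x` for large `x`
  set s₀ : {s : ℝ // 0 ≤ s} := ⟨(|M| + 1) ^ 2, sq_nonneg _⟩
  have hsqrt : √s₀.1 = |M| + 1 := sqrt_sq (by positivity)
  filter_upwards [eventually_ge_atTop (max 1 |φ s₀|)] with x hx
  have hx1 : 1 ≤ x := le_of_max_le_left hx
  have hxφ : |φ s₀| ≤ x := le_of_max_le_right hx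
  have hterm : 2 * x * √s₀.1 - φ s₀ ≤ logDualL φ x :=
    le_ciSup (bddAbove_logDualL_terms hφc hφ x) s₀
  rw [hsqrt] at hterm
  rw [le_div_iff₀ (by linarith)]
  nlinarith [le_abs_self M, neg_abs_le M, le_abs_self (φ s₀)]

end LogDualL

theorem dualL_eq_exp_logDualL {u : ℝ → ℝ} (hpos : ∀ r ≥ 0, 0 < u r)
    (hbdd : ∀ x, BddAbove (range fun s : {s : ℝ // 0 ≤ s} => 2 * x * √s - log (u s)))
    {r : ℝ} (hr : 0 ≤ r) : dualL u r = exp (logDualL (fun s => log (u s)) √r) := by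
  have hterms : (fun s : {s : ℝ // 0 ≤ s} => exp (2 * √(r * s)) / u s)
      = fun s : {s : ℝ // 0 ≤ s} => exp (2 * √r * √s - log (u s)) := by
    funext s
    rw [exp_sub, exp_log (hpos s.1 s.2), sqrt_mul hr, mul_assoc]
  rw [dualL, hterms, logDualL,
    exp_monotone.map_ciSup_of_continuousAt continuous_exp.continuousAt (hbdd _)]

theorem dual_legendre_properties (u : ℝ → ℝ)
    (hpos : ∀ r ≥ 0, 0 < u r)
    (hcont : ContinuousOn u (Set.Ici 0))
    (hlim : Filter.Tendsto (fun r => Real.log (u r) / Real.sqrt r)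
      Filter.atTop Filter.atTop) :
    (∀ r ≥ (0 : ℝ), 0 < dualL u r) ∧
    ContinuousOn (dualL u) (Set.Ici 0) ∧
    Filter.Tendsto (fun r => Real.log (dualL u r) / Real.sqrt r)
      Filter.atTop Filter.atTop ∧
    MonotoneOn (dualL u) (Set.Ici 0) ∧
    ConvexOn ℝ (Set.Ici 0) (fun x : ℝ => Real.log (dualL u (x ^ 2))) := by
  have hφc : ContinuousOn (fun s => log (u s)) (Ici 0) := hcont.log fun s hs => (hpos s hs).ne'
  have hdual {r : ℝ} (hr : 0 ≤ r) :=
    dualL_eq_exp_logDualL hpos (bddAbove_logDualL_terms hφc hlim) hr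
  have hconv := convexOn_logDualL hφc hlim
  have hcont : Continuous (logDualL fun s => log (u s)) :=
    continuousOn_univ.1 (hconv.continuousOn isOpen_univ)
  refine ⟨fun r hr => hdual hr ▸ exp_pos _, ?_, ?_, ?_, ?_⟩
  · exact (continuous_exp.comp (hcont.comp continuous_sqrt)).continuousOn.congr fun r hr => hdual hr
  · refine ((tendsto_logDualL_div_atTop hφc hlim).comp tendsto_sqrt_atTop).congr' ?_
    filter_upwards [eventually_ge_atTop 0] with r hr
    simp [hdual hr]
  · intro x hx y hy hxy
    rw [hdual hx, hdual hy, exp_le_exp]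
    exact monotoneOn_logDualL hφc hlim (sqrt_nonneg x) (sqrt_nonneg y) (sqrt_le_sqrt hxy)
  · refine (hconv.subset (subset_univ _) (convex_Ici 0)).congr fun x hx => ?_
    simp [hdual (sq_nonneg x), sqrt_sq (mem_Ici.1 hx)]
end

section
/- Let u ∈ C_{+,1/2} be (log, x²)-convex and increasing on [0,∞). Then (u*)* = u on [0,∞), where u*(r) = sup_{s≥0} e^{2√(rs)}/u(s). -/
open Real Set

instance : Nonempty {s : ℝ // (0:ℝ) ≤ s} := ⟨⟨0, le_rfl⟩⟩

/-- The (scaled) one-sided Legendre conjugate. -/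
noncomputable def conjF (w : ℝ → ℝ) (x : ℝ) : ℝ :=
  ⨆ y : {y : ℝ // 0 ≤ y}, (2 * x * y - w y)

lemma dual_eq_exp_conj (u w : ℝ → ℝ) (x : ℝ) (hx : 0 ≤ x)
    (hrel : ∀ y : ℝ, 0 ≤ y → u (y ^ 2) = Real.exp (w y))
    (hB : BddAbove (Set.range fun y : {y : ℝ // 0 ≤ y} => 2 * x * y - w y)) :
    dualL u (x ^ 2) = Real.exp (conjF w x) := by
  have hrange : (Set.range fun s : {s : ℝ // 0 ≤ s} =>
      Real.exp (2 * Real.sqrt (x ^ 2 * s)) / u s)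
      = Set.range fun y : {y : ℝ // 0 ≤ y} => Real.exp (2 * x * y - w y) := by
    ext t
    constructor
    · rintro ⟨⟨s, hs⟩, rfl⟩
      refine ⟨⟨Real.sqrt s, Real.sqrt_nonneg s⟩, ?_⟩
      have h1 : u s = Real.exp (w (Real.sqrt s)) := by
        rw [← hrel (Real.sqrt s) (Real.sqrt_nonneg s), Real.sq_sqrt hs]
      have h2 : Real.sqrt (x ^ 2 * s) = x * Real.sqrt s := by
        rw [Real.sqrt_mul (sq_nonneg x), Real.sqrt_sq hx]
      simp only
      rw [h1, h2, Real.exp_sub]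
      ring_nf
    · rintro ⟨⟨y, hy⟩, rfl⟩
      refine ⟨⟨y ^ 2, sq_nonneg y⟩, ?_⟩
      have h1 : u (y ^ 2) = Real.exp (w y) := hrel y hy
      have h2 : Real.sqrt (x ^ 2 * y ^ 2) = x * y := by
        rw [show x ^ 2 * y ^ 2 = (x * y) ^ 2 by ring, Real.sqrt_sq (mul_nonneg hx hy)]
      simp only
      rw [h1, h2, Real.exp_sub]
      ring_nf
  have hmap : Real.exp (conjF w x)
      = ⨆ y : {y : ℝ // 0 ≤ y}, Real.exp (2 * x * y - w y) :=
    Monotone.map_ciSup_of_continuousAt (Real.continuous_exp.continuousAt)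
      Real.exp_monotone hB
  calc dualL u (x ^ 2)
      = sSup (Set.range fun s : {s : ℝ // 0 ≤ s} =>
          Real.exp (2 * Real.sqrt (x ^ 2 * s)) / u s) := rfl
    _ = sSup (Set.range fun y : {y : ℝ // 0 ≤ y} =>
          Real.exp (2 * x * y - w y)) := by rw [hrange]
    _ = Real.exp (conjF w x) := hmap.symm

lemma conj_biconj (w : ℝ → ℝ) (hmono : MonotoneOn w (Set.Ici 0))
    (hconv : ConvexOn ℝ (Set.Ici 0) w)
    (hB1 : ∀ x : ℝ, 0 ≤ x →
      BddAbove (Set.range fun y : {y : ℝ // 0 ≤ y} => 2 * x * y - w y)) :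
    (∀ x : ℝ, 0 ≤ x →
      BddAbove (Set.range fun y : {y : ℝ // 0 ≤ y} => 2 * x * y - conjF w y))
    ∧ ∀ x : ℝ, 0 ≤ x → conjF (conjF w) x = w x := by
  have hconj_ge : ∀ x : ℝ, 0 ≤ x → ∀ y : ℝ, 0 ≤ y →
      2 * x * y - w y ≤ conjF w x := by
    intro x hx y hy
    exact le_ciSup (hB1 x hx) (⟨y, hy⟩ : {y : ℝ // 0 ≤ y})
  have hB2 : ∀ x : ℝ, 0 ≤ x →
      BddAbove (Set.range fun y : {y : ℝ // 0 ≤ y} => 2 * x * y - conjF w y) := by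
    intro x hx
    refine ⟨w (x + 1), ?_⟩
    rintro t ⟨⟨y, hy⟩, rfl⟩
    have h := hconj_ge y hy (x + 1) (by linarith)
    simp only
    nlinarith
  refine ⟨hB2, ?_⟩
  intro x hx
  have hle : conjF (conjF w) x ≤ w x := by
    apply ciSup_le
    rintro ⟨y, hy⟩
    have h := hconj_ge y hy x hx
    simp only
    nlinarith
  have hge : w x ≤ conjF (conjF w) x := by
    rcases eq_or_lt_of_le hx with hx0 | hx0
    · -- x = 0
      have h1 : conjF w 0 ≤ -w 0 := by
        apply ciSup_le
        rintro ⟨y, hy⟩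
        have := hmono (Set.self_mem_Ici) hy hy
        simp only
        linarith
      have h2 : 2 * x * (0:ℝ) - conjF w 0 ≤ conjF (conjF w) x :=
        le_ciSup (hB2 x hx) (⟨0, le_rfl⟩ : {y : ℝ // 0 ≤ y})
      rw [← hx0] at h2 ⊢
      simp only [mul_zero, zero_sub] at h2
      linarith
    · -- x > 0 : supporting line via sup of left slopes
      set S : Set ℝ := (fun z => (w x - w z) / (x - z)) '' (Set.Ico 0 x) with hS
      have hSne : S.Nonempty := ⟨(w x - w 0) / (x - 0), 0, ⟨le_rfl, hx0⟩, rfl⟩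
      have hSbdd : BddAbove S := by
        refine ⟨(w (x + 1) - w x) / ((x + 1) - x), ?_⟩
        rintro t ⟨z, ⟨hz0, hzx⟩, rfl⟩
        have := hconv.slope_mono_adjacent hz0 (show x + 1 ∈ Set.Ici (0:ℝ) by
          simp; linarith) hzx (lt_add_one x)
        linarith
      set p := sSup S with hp
      have hp0 : 0 ≤ p := by
        have h0 : (w x - w 0) / (x - 0) ≤ p :=
          le_csSup hSbdd ⟨0, ⟨le_rfl, hx0⟩, rfl⟩
        have hw0 : w 0 ≤ w x := hmono Set.self_mem_Ici hx hx
        have : 0 ≤ (w x - w 0) / (x - 0) := div_nonneg (by linarith) (by linarith)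
        linarith
      have hsupp : ∀ y : ℝ, 0 ≤ y → w x + p * (y - x) ≤ w y := by
        intro y hy
        rcases lt_trichotomy y x with hyx | hyx | hyx
        · have h1 : (w x - w y) / (x - y) ≤ p :=
            le_csSup hSbdd ⟨y, ⟨hy, hyx⟩, rfl⟩
          have h2 : w x - w y ≤ p * (x - y) := by
            rw [div_le_iff₀ (by linarith)] at h1; linarith
          have h3 : p * (y - x) = -(p * (x - y)) := by ring
          linarith [h3 ▸ (le_refl (w x + p * (y - x)))]
        · subst hyx; simp
        · have h1 : p ≤ (w y - w x) / (y - x) := by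
            apply csSup_le hSne
            rintro t ⟨z, ⟨hz0, hzx⟩, rfl⟩
            exact hconv.slope_mono_adjacent hz0 (le_of_lt (hx0.trans hyx)) hzx hyx
          have h2 : p * (y - x) ≤ w y - w x := by
            rw [le_div_iff₀ (by linarith)] at h1; linarith
          linarith
      have hconjp : conjF w (p / 2) ≤ p * x - w x := by
        apply ciSup_le
        rintro ⟨y, hy⟩
        have h := hsupp y hy
        simp only
        nlinarith
      have h2 : 2 * x * (p / 2) - conjF w (p / 2) ≤ conjF (conjF w) x :=
        le_ciSup (hB2 x hx) (⟨p / 2, by linarith⟩ : {y : ℝ // 0 ≤ y})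
      nlinarith
  linarith

theorem dual_legendre_involutive (u : ℝ → ℝ)
    (hpos : ∀ r ≥ 0, 0 < u r)
    (hcont : ContinuousOn u (Set.Ici 0))
    (hlim : Filter.Tendsto (fun r => Real.log (u r) / Real.sqrt r)
      Filter.atTop Filter.atTop)
    (hconv : ConvexOn ℝ (Set.Ici 0) (fun x : ℝ => Real.log (u (x ^ 2))))
    (hmono : MonotoneOn u (Set.Ici 0)) :
    ∀ r ≥ (0 : ℝ), dualL (dualL u) r = u r := by
  set w : ℝ → ℝ := fun x => Real.log (u (x ^ 2)) with hw
  have hw_exp : ∀ y : ℝ, 0 ≤ y → u (y ^ 2) = Real.exp (w y) := by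
    intro y _
    rw [hw, Real.exp_log (hpos _ (sq_nonneg y))]
  have hw_mono : MonotoneOn w (Set.Ici 0) := by
    intro a ha b hb hab
    have hab2 : a ^ 2 ≤ b ^ 2 := pow_le_pow_left₀ ha hab 2
    exact Real.log_le_log (hpos _ (sq_nonneg a))
      (hmono (sq_nonneg a) (sq_nonneg b) hab2)
  have hgrow : ∀ M : ℝ, ∃ Y : ℝ, 0 ≤ Y ∧ ∀ y : ℝ, Y ≤ y → M * y ≤ w y := by
    intro M
    obtain ⟨R, hR⟩ := Filter.eventually_atTop.mp (Filter.tendsto_atTop.mp hlim M)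
    refine ⟨max (Real.sqrt (max R 0)) 1, le_trans zero_le_one (le_max_right _ _), ?_⟩
    intro y hy
    have hy1 : (1:ℝ) ≤ y := le_trans (le_max_right _ _) hy
    have hy0 : 0 < y := lt_of_lt_of_le zero_lt_one hy1
    have hys : Real.sqrt (max R 0) ≤ y := le_trans (le_max_left _ _) hy
    have hy2 : R ≤ y ^ 2 := by
      have h1 : (Real.sqrt (max R 0)) ^ 2 ≤ y ^ 2 :=
        pow_le_pow_left₀ (Real.sqrt_nonneg _) hys 2
      rw [Real.sq_sqrt (le_max_right R 0)] at h1
      exact le_trans (le_max_left R 0) h1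
    have h3 := hR (y ^ 2) hy2
    rw [Real.sqrt_sq hy0.le] at h3
    rw [le_div_iff₀ hy0] at h3
    exact h3
  have hB1 : ∀ x : ℝ, 0 ≤ x →
      BddAbove (Set.range fun y : {y : ℝ // 0 ≤ y} => 2 * x * y - w y) := by
    intro x hx
    obtain ⟨Y, hY0, hY⟩ := hgrow (2 * x + 1)
    refine ⟨max (2 * x * Y - w 0) 0, ?_⟩
    rintro t ⟨⟨y, hy⟩, rfl⟩
    simp only
    rcases le_or_gt y Y with h | h
    · have h1 : 2 * x * y ≤ 2 * x * Y := by nlinarith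
      have h2 : w 0 ≤ w y := hw_mono Set.self_mem_Ici hy hy
      have : 2 * x * y - w y ≤ 2 * x * Y - w 0 := by linarith
      exact this.trans (le_max_left _ _)
    · have h1 : (2 * x + 1) * y ≤ w y := hY y h.le
      have : 2 * x * y - w y ≤ 0 := by nlinarith
      exact this.trans (le_max_right _ _)
  obtain ⟨hB2, hbiconj⟩ := conj_biconj w hw_mono hconv hB1
  intro r hr
  set x := Real.sqrt r with hxdef
  have hx : 0 ≤ x := Real.sqrt_nonneg r
  have hx2 : x ^ 2 = r := Real.sq_sqrt hr
  have step1 : ∀ z : ℝ, 0 ≤ z → dualL u (z ^ 2) = Real.exp (conjF w z) :=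
    fun z hz => dual_eq_exp_conj u w z hz hw_exp (hB1 z hz)
  have hrel2 : ∀ y : ℝ, 0 ≤ y → dualL u (y ^ 2) = Real.exp (conjF w y) := step1
  have step2 : dualL (dualL u) (x ^ 2) = Real.exp (conjF (conjF w) x) :=
    dual_eq_exp_conj (dualL u) (conjF w) x hx hrel2 (hB2 x hx)
  rw [← hx2, step2, hbiconj x hx, ← hw_exp x hx]
end

section
/- Let {α(n)} be a sequence of positive reals with α(0) ≥ 1 that is equivalent to a sequence {λ(n)} such that {λ(n)/n!} is log-concave. Then there exists a constant c ≥ 1 such that α(n+m) ≤ c^{n+m} α(n) α(m) for all n, m ≥ 0. -/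
/-!
For a positive log-concave sequence the ratios `γ (n + 1) / γ n` decrease, which gives
`γ (n + m) γ 0 ≤ γ n γ m`. Applied to `γ n = λ n / n!` this reads
`λ (n + m) λ 0 ≤ (n + m).choose n · λ n λ m ≤ 2 ^ (n + m) λ n λ m`, and a bound of this
shape survives passing to an equivalent sequence, at the cost of a constant and a geometric
factor. Finally `A B ^ N ≤ (max A 1 · max B 1) ^ N` for `N ≥ 1`, while `N = 0` is the
hypothesis `1 ≤ α 0`.
-/

open Nat

section LogConcave

variable {γ : ℕ → ℝ}

theorem antitone_succ_div_of_logConcave (hpos : ∀ n, 0 < γ n)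
    (hlc : ∀ n, γ n * γ (n + 2) ≤ γ (n + 1) ^ 2) :
    Antitone fun n => γ (n + 1) / γ n := by
  refine antitone_nat_of_succ_le fun n => ?_
  rw [div_le_div_iff₀ (hpos _) (hpos _)]
  linarith [hlc n]

theorem mul_apply_zero_le_mul_of_logConcave (hpos : ∀ n, 0 < γ n)
    (hlc : ∀ n, γ n * γ (n + 2) ≤ γ (n + 1) ^ 2) (n m : ℕ) :
    γ (n + m) * γ 0 ≤ γ n * γ m := by
  induction n with
  | zero => rw [zero_add, mul_comm]
  | succ n ih =>
    have hratio := antitone_succ_div_of_logConcave hpos hlc (Nat.le_add_right n m)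
    calc γ (n + 1 + m) * γ 0 = γ (n + m + 1) / γ (n + m) * (γ (n + m) * γ 0) := by
          rw [Nat.add_right_comm]; field_simp [(hpos (n + m)).ne']
      _ ≤ γ (n + 1) / γ n * (γ n * γ m) :=
          mul_le_mul hratio ih (by positivity [hpos (n + m), hpos 0])
            (by positivity [hpos (n + 1), hpos n])
      _ = γ (n + 1) * γ m := by field_simp [(hpos n).ne']

end LogConcave

theorem mul_apply_zero_le_two_pow_mul_of_logConcave_div_factorial {lam : ℕ → ℝ}
    (hpos : ∀ n, 0 < lam n)
    (hlc : ∀ n, lam n / n ! * (lam (n + 2) / (n + 2)!) ≤ (lam (n + 1) / (n + 1)!) ^ 2)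
    (n m : ℕ) : lam (n + m) * lam 0 ≤ 2 ^ (n + m) * lam n * lam m := by
  have hγ := mul_apply_zero_le_mul_of_logConcave (γ := fun n => lam n / n !)
    (fun n => by positivity [hpos n]) hlc n m
  have hfact : ((n + m)! : ℝ) = (n + m).choose m * n ! * m ! := by
    exact_mod_cast (Nat.add_choose_mul_factorial_mul_factorial n m).symm
  have hchoose : ((n + m).choose m : ℝ) ≤ 2 ^ (n + m) := by
    exact_mod_cast Nat.choose_le_two_pow _ _
  simp only [factorial_zero, cast_one, div_one] at hγ
  rw [div_mul_eq_mul_div, div_le_iff₀ (by positivity), hfact] at hγ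
  calc lam (n + m) * lam 0 ≤ lam n / n ! * (lam m / m !) * ((n + m).choose m * n ! * m !) := hγ
    _ = (n + m).choose m * lam n * lam m := by field_simp
    _ ≤ 2 ^ (n + m) * lam n * lam m := by gcongr <;> positivity [hpos n, hpos m]

theorem le_mul_pow_mul_mul_of_equiv {f g : ℕ → ℝ} {K₁ K₂ c₁ c₂ D E : ℝ}
    (hK₁ : 0 < K₁) (hc₁ : 0 < c₁) (hK₂ : 0 ≤ K₂) (hc₂ : 0 ≤ c₂) (hD : 0 ≤ D) (hE : 0 < E)
    (hf : ∀ n, 0 ≤ f n) (hfg : ∀ n, K₁ * c₁ ^ n * f n ≤ g n ∧ g n ≤ K₂ * c₂ ^ n * f n)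
    (hsub : ∀ n m, f (n + m) * E ≤ D ^ (n + m) * f n * f m) (n m : ℕ) :
    g (n + m) ≤ K₂ / (E * K₁ ^ 2) * (c₂ * D / c₁) ^ (n + m) * g n * g m := by
  have hg : ∀ k, 0 ≤ g k := fun k => (by positivity [hf k] : 0 ≤ K₁ * c₁ ^ k * f k).trans (hfg k).1
  have hlower : K₁ ^ 2 * c₁ ^ (n + m) * f n * f m ≤ g n * g m :=
    calc K₁ ^ 2 * c₁ ^ (n + m) * f n * f m = (K₁ * c₁ ^ n * f n) * (K₁ * c₁ ^ m * f m) := by ring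
      _ ≤ g n * g m := mul_le_mul (hfg n).1 (hfg m).1 (by positivity [hf m]) (hg n)
  calc g (n + m) ≤ K₂ * c₂ ^ (n + m) * f (n + m) := (hfg _).2
    _ = K₂ * c₂ ^ (n + m) / E * (f (n + m) * E) := by field_simp
    _ ≤ K₂ * c₂ ^ (n + m) / E * (D ^ (n + m) * f n * f m) :=
        mul_le_mul_of_nonneg_left (hsub n m) (by positivity)
    _ = K₂ / (E * K₁ ^ 2) * (c₂ * D / c₁) ^ (n + m) * (K₁ ^ 2 * c₁ ^ (n + m) * f n * f m) := by
        rw [div_pow, mul_pow]; field_simp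
    _ ≤ K₂ / (E * K₁ ^ 2) * (c₂ * D / c₁) ^ (n + m) * (g n * g m) := by gcongr
    _ = K₂ / (E * K₁ ^ 2) * (c₂ * D / c₁) ^ (n + m) * g n * g m := by ring

theorem exists_one_le_pow_mul_mul_bound {g : ℕ → ℝ} {A B : ℝ} (hB : 0 ≤ B)
    (hg : ∀ n, 0 ≤ g n) (hg0 : 1 ≤ g 0) (hsub : ∀ n m, g (n + m) ≤ A * B ^ (n + m) * g n * g m) :
    ∃ c ≥ (1 : ℝ), ∀ n m, g (n + m) ≤ c ^ (n + m) * g n * g m := by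
  have hA1 : 1 ≤ max A 1 := le_max_right A 1
  have hB1 : 1 ≤ max B 1 := le_max_right B 1
  refine ⟨max A 1 * max B 1, one_le_mul_of_one_le_of_one_le hA1 hB1, fun n m => ?_⟩
  rcases (n + m).eq_zero_or_pos with hN | hN
  · obtain ⟨rfl, rfl⟩ := Nat.add_eq_zero_iff.mp hN
    simpa using le_mul_of_one_le_right (hg 0) hg0
  have hconst : A * B ^ (n + m) ≤ (max A 1 * max B 1) ^ (n + m) :=
    calc A * B ^ (n + m) ≤ max A 1 * max B 1 ^ (n + m) :=
          mul_le_mul (le_max_left A 1) (pow_le_pow_left₀ hB (le_max_left B 1) _)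
            (pow_nonneg hB _) (zero_le_one.trans hA1)
      _ ≤ max A 1 ^ (n + m) * max B 1 ^ (n + m) := by gcongr; exact le_self_pow₀ hA1 hN.ne'
      _ = (max A 1 * max B 1) ^ (n + m) := (mul_pow _ _ _).symm
  calc g (n + m) ≤ A * B ^ (n + m) * g n * g m := hsub n m
    _ ≤ (max A 1 * max B 1) ^ (n + m) * g n * g m := by gcongr <;> exact hg _

theorem near_B2_implies_C2_general (α lam : ℕ → ℝ)
    (hlam : ∀ n, 0 < lam n)
    (hα0 : 1 ≤ α 0)
    (hequiv : ∃ K₁ > (0 : ℝ), ∃ K₂ > (0 : ℝ), ∃ c₁ > (0 : ℝ), ∃ c₂ > (0 : ℝ),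
      ∀ n : ℕ, K₁ * c₁ ^ n * lam n ≤ α n ∧ α n ≤ K₂ * c₂ ^ n * lam n)
    (hlc : ∀ n : ℕ,
      (lam n / n.factorial) * (lam (n + 2) / (n + 2).factorial)
        ≤ (lam (n + 1) / (n + 1).factorial) ^ 2) :
    ∃ c ≥ (1 : ℝ), ∀ n m : ℕ, α (n + m) ≤ c ^ (n + m) * α n * α m := by
  obtain ⟨K₁, hK₁, K₂, hK₂, c₁, hc₁, c₂, hc₂, hequiv⟩ := hequiv
  have hα_nonneg : ∀ n, 0 ≤ α n := fun n =>
    (mul_pos (mul_pos hK₁ (pow_pos hc₁ n)) (hlam n)).le.trans (hequiv n).1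
  have hlam_sub := mul_apply_zero_le_two_pow_mul_of_logConcave_div_factorial hlam hlc
  exact exists_one_le_pow_mul_mul_bound (by positivity) hα_nonneg hα0
    (le_mul_pow_mul_mul_of_equiv hK₁ hc₁ hK₂.le hc₂.le zero_le_two (hlam 0)
      (fun n => (hlam n).le) hequiv hlam_sub)

theorem near_B2_implies_C2 (α lam : ℕ → ℝ)
    (hα : ∀ n, 0 < α n) (hlam : ∀ n, 0 < lam n)
    (hα0 : 1 ≤ α 0)
    (hequiv : ∃ K₁ > (0 : ℝ), ∃ K₂ > (0 : ℝ), ∃ c₁ > (0 : ℝ), ∃ c₂ > (0 : ℝ),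
      ∀ n : ℕ, K₁ * c₁ ^ n * lam n ≤ α n ∧ α n ≤ K₂ * c₂ ^ n * lam n)
    (hlc : ∀ n : ℕ,
      (lam n / n.factorial) * (lam (n + 2) / (n + 2).factorial)
        ≤ (lam (n + 1) / (n + 1).factorial) ^ 2) :
    ∃ c ≥ (1 : ℝ), ∀ n m : ℕ, α (n + m) ≤ c ^ (n + m) * α n * α m :=
  near_B2_implies_C2_general α lam hlam hα0 hequiv hlc
end

section
/- Let {α(n)} be a sequence of positive reals with 0 < α(0) ≤ 1 that is equivalent to a sequence {λ(n)} such that {1/(n! λ(n))} is log-concave. Then there exists a constant c ≥ 1 such that α(n) α(m) ≤ c^{n+m} α(n+m) for all n, m ≥ 0. -/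
lemma my_ratio_step (γ : ℕ → ℝ) (hpos : ∀ n, 0 < γ n)
    (hlc : ∀ n, γ n * γ (n+2) ≤ γ (n+1)^2) :
    ∀ n k, γ (n+k+1) * γ n ≤ γ (n+1) * γ (n+k) := by
  intro n k
  induction k with
  | zero => simp [mul_comm]
  | succ k ih =>
    have h1 := hlc (n+k)
    have p1 := hpos (n+k)
    have p2 := hpos (n+k+1)
    have p3 := hpos n
    have p4 := hpos (n+1)
    have p5 := hpos (n+k+2)
    have key : (γ (n+k+1) * γ n) * (γ (n+k) * γ (n+k+2)) ≤ (γ (n+1) * γ (n+k)) * γ (n+k+1)^2 :=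
      mul_le_mul ih h1 (by positivity) (by positivity)
    show γ (n+k+2) * γ n ≤ γ (n+1) * γ (n+k+1)
    nlinarith [mul_pos p1 p2, key]

lemma my_logconcave_bound (γ : ℕ → ℝ) (hpos : ∀ n, 0 < γ n)
    (hlc : ∀ n, γ n * γ (n+2) ≤ γ (n+1)^2) :
    ∀ n m, γ 0 * γ (n+m) ≤ γ n * γ m := by
  intro n
  induction n with
  | zero => intro m; rw [Nat.zero_add]
  | succ n ih =>
    intro m
    have ihm := ih m
    have hr := my_ratio_step γ hpos hlc n m
    have p1 := hpos (n+m)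
    have p2 := hpos (n+m+1)
    have p3 := hpos m
    have p4 := hpos 0
    have p5 := hpos n
    have p6 := hpos (n+1)
    rw [show n+1+m = n+m+1 by omega]
    nlinarith [mul_le_mul_of_nonneg_right ihm p2.le, mul_le_mul_of_nonneg_right hr p3.le]

lemma my_choose_le (n k : ℕ) : n.choose k ≤ 2 ^ n := by
  rcases le_or_gt k n with h | h
  · calc n.choose k ≤ ∑ i ∈ Finset.range (n+1), n.choose i :=
        Finset.single_le_sum (fun i _ => Nat.zero_le _) (Finset.mem_range.mpr (by omega))
      _ = 2 ^ n := Nat.sum_range_choose n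
  · rw [Nat.choose_eq_zero_of_lt h]; positivity

theorem near_B2tilde_implies_C3 (α lam : ℕ → ℝ)
    (hα : ∀ n, 0 < α n) (hlam : ∀ n, 0 < lam n)
    (hα0 : 0 < α 0) (hα0' : α 0 ≤ 1)
    (hequiv : ∃ K₁ > (0 : ℝ), ∃ K₂ > (0 : ℝ), ∃ c₁ > (0 : ℝ), ∃ c₂ > (0 : ℝ),
      ∀ n : ℕ, K₁ * c₁ ^ n * lam n ≤ α n ∧ α n ≤ K₂ * c₂ ^ n * lam n)
    (hlc : ∀ n : ℕ,
      (1 / (n.factorial * lam n)) * (1 / ((n + 2).factorial * lam (n + 2)))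
        ≤ (1 / ((n + 1).factorial * lam (n + 1))) ^ 2) :
    ∃ c ≥ (1 : ℝ), ∀ n m : ℕ, α n * α m ≤ c ^ (n + m) * α (n + m) := by
  obtain ⟨K₁, hK₁, K₂, hK₂, c₁, hc₁, c₂, hc₂, hKc⟩ := hequiv
  set γ : ℕ → ℝ := fun n => 1 / (n.factorial * lam n) with hγ
  have hγpos : ∀ n, 0 < γ n := fun n => by
    have := hlam n
    have : (0:ℝ) < n.factorial := by exact_mod_cast n.factorial_pos
    positivity
  have hlc' : ∀ n, γ n * γ (n+2) ≤ γ (n+1)^2 := hlc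
  -- key multiplicative bound on lam
  have hkey : ∀ n m : ℕ, lam n * lam m ≤ lam 0 * 2 ^ (n+m) * lam (n+m) := by
    intro n m
    have h := my_logconcave_bound γ hγpos hlc' n m
    have hfn : (0:ℝ) < n.factorial := by exact_mod_cast n.factorial_pos
    have hfm : (0:ℝ) < m.factorial := by exact_mod_cast m.factorial_pos
    have hfnm : (0:ℝ) < (n+m).factorial := by exact_mod_cast (n+m).factorial_pos
    have hl0 := hlam 0
    have hln := hlam n
    have hlm := hlam m
    have hlnm := hlam (n+m)
    -- from h : (1/(0! * lam 0)) * (1/((n+m)! * lam (n+m))) ≤ (1/(n! lam n)) * (1/(m! lam m))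
    have h2 : (n.factorial : ℝ) * lam n * ((m.factorial : ℝ) * lam m)
        ≤ ((0:ℕ).factorial : ℝ) * lam 0 * (((n+m).factorial : ℝ) * lam (n+m)) := by
      have hA : (0:ℝ) < (n.factorial : ℝ) * lam n * ((m.factorial : ℝ) * lam m) := by positivity
      have hB : (0:ℝ) < ((0:ℕ).factorial : ℝ) * lam 0 * (((n+m).factorial : ℝ) * lam (n+m)) := by
        simp [Nat.factorial]; positivity
      rw [hγ] at h
      simp only at h
      rw [one_div_mul_one_div, one_div_mul_one_div] at h
      exact le_of_one_div_le_one_div hB (by rwa [])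
    have hchoose : ((n+m).factorial : ℝ) ≤ 2 ^ (n+m) * (n.factorial * m.factorial) := by
      have h1 : (n+m).choose n * n.factorial * m.factorial = (n+m).factorial := by
        have := Nat.choose_mul_factorial_mul_factorial (Nat.le_add_right n m)
        simpa using this
      have h2 : (n+m).choose n ≤ 2 ^ (n+m) := my_choose_le _ _
      calc ((n+m).factorial : ℝ) = ((n+m).choose n : ℝ) * n.factorial * m.factorial := by
            exact_mod_cast (congrArg (fun x : ℕ => (x : ℝ)) h1).symm
        _ ≤ 2 ^ (n+m) * n.factorial * m.factorial := by
            have : ((n+m).choose n : ℝ) ≤ 2 ^ (n+m) := by exact_mod_cast h2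
            apply mul_le_mul_of_nonneg_right (mul_le_mul_of_nonneg_right this hfn.le) hfm.le
        _ = 2 ^ (n+m) * (n.factorial * m.factorial) := by ring
    simp only [Nat.factorial_zero, Nat.cast_one, one_mul] at h2
    -- h2 : n! lam n * (m! lam m) ≤ lam 0 * ((n+m)! * lam (n+m))
    have h3 : (n.factorial : ℝ) * (m.factorial : ℝ) * (lam n * lam m)
        ≤ lam 0 * (2 ^ (n+m) * (n.factorial * m.factorial)) * lam (n+m) := by
      calc (n.factorial : ℝ) * (m.factorial : ℝ) * (lam n * lam m)
          = (n.factorial : ℝ) * lam n * ((m.factorial : ℝ) * lam m) := by ring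
        _ ≤ lam 0 * (((n+m).factorial : ℝ) * lam (n+m)) := h2
        _ ≤ lam 0 * ((2 ^ (n+m) * (n.factorial * m.factorial)) * lam (n+m)) := by
            apply mul_le_mul_of_nonneg_left (mul_le_mul_of_nonneg_right hchoose hlnm.le) hl0.le
        _ = lam 0 * (2 ^ (n+m) * (n.factorial * m.factorial)) * lam (n+m) := by ring
    have hfpos : (0:ℝ) < (n.factorial : ℝ) * (m.factorial : ℝ) := by positivity
    nlinarith [h3, hfpos, hlam (n+m), hlam 0, pow_pos (two_pos (α := ℝ)) (n+m)]
  -- constants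
  set C : ℝ := K₂ ^ 2 * lam 0 / K₁ with hC
  set d : ℝ := 2 * c₂ / c₁ with hd
  have hCpos : 0 < C := div_pos (mul_pos (pow_pos hK₂ 2) (hlam 0)) hK₁
  have hdpos : 0 < d := div_pos (by linarith) hc₁
  refine ⟨max C 1 * max d 1, ?_, ?_⟩
  · have := le_max_right C 1
    have := le_max_right d 1
    nlinarith
  intro n m
  rcases Nat.eq_zero_or_pos (n + m) with hN | hN
  · obtain ⟨hn0, hm0⟩ : n = 0 ∧ m = 0 := by omega
    subst hn0; subst hm0
    simpa using mul_le_of_le_one_right hα0.le hα0'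
  · have h1 := (hKc n).2
    have h2 := (hKc m).2
    have h3 := (hKc (n+m)).1
    have step1 : α n * α m ≤ K₂ ^ 2 * c₂ ^ (n+m) * (lam n * lam m) := by
      calc α n * α m ≤ (K₂ * c₂ ^ n * lam n) * (K₂ * c₂ ^ m * lam m) :=
            mul_le_mul h1 h2 (hα m).le (mul_pos (mul_pos hK₂ (pow_pos hc₂ n)) (hlam n)).le
        _ = K₂ ^ 2 * c₂ ^ (n+m) * (lam n * lam m) := by rw [pow_add]; ring
    have step2 : K₂ ^ 2 * c₂ ^ (n+m) * (lam n * lam m)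
        ≤ K₂ ^ 2 * c₂ ^ (n+m) * (lam 0 * 2 ^ (n+m) * lam (n+m)) :=
      mul_le_mul_of_nonneg_left (hkey n m) (mul_pos (pow_pos hK₂ 2) (pow_pos hc₂ (n+m))).le
    have step3 : K₂ ^ 2 * c₂ ^ (n+m) * (lam 0 * 2 ^ (n+m) * lam (n+m))
        = C * d ^ (n+m) * (K₁ * c₁ ^ (n+m) * lam (n+m)) := by
      rw [hC, hd, div_pow, mul_pow]
      field_simp
    have step4 : C * d ^ (n+m) * (K₁ * c₁ ^ (n+m) * lam (n+m)) ≤ C * d ^ (n+m) * α (n+m) :=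
      mul_le_mul_of_nonneg_left h3 (mul_pos hCpos (pow_pos hdpos _)).le
    have step5 : C * d ^ (n+m) ≤ (max C 1 * max d 1) ^ (n+m) := by
      rw [mul_pow]
      have hc1 : C ≤ (max C 1) ^ (n+m) :=
        le_trans (le_max_left C 1) (le_self_pow₀ (le_max_right C 1) (by omega))
      have hd1 : d ^ (n+m) ≤ (max d 1) ^ (n+m) :=
        pow_le_pow_left₀ hdpos.le (le_max_left d 1) _
      exact mul_le_mul hc1 hd1 (pow_pos hdpos _).le (pow_nonneg (le_trans zero_le_one (le_max_right C 1)) _)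
    calc α n * α m ≤ C * d ^ (n+m) * α (n+m) := by
          linarith [step1, step2, step3 ▸ step4]
      _ ≤ (max C 1 * max d 1) ^ (n+m) * α (n+m) :=
          mul_le_mul_of_nonneg_right step5 (hα (n+m)).le
end
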